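/- Let A and M be vector spaces over a field K of characteristic 0. Let f : M^{⊗(m+1)} → A and g : M^{⊗(n+1)} → A be multilinear maps, and let f̂, ĝ : (A⊕M)^{⊗(m+1)} → A⊕M, (A⊕M)^{⊗(n+1)} → A⊕M be their horizontal lifts. Then the Gerstenhaber bracket of the lifts vanishes: [f̂, ĝ] = 0. (Equivalently, the graded subspace of horizontal lifts of maps M^{⊗(k+1)} → A is an abelian subalgebra of the graded Lie algebra of multilinear maps on A⊕M with the Gerstenhaber bracket.) -/
import Mathlib


/-!
Statement 0: the horizontal lifts of multilinear maps `M^{⊗(m+1)} → A` form an abelian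
subalgebra of the graded Lie algebra of multilinear maps on `A ⊕ M` with the
Gerstenhaber bracket: the bracket of two such lifts vanishes.
-/

section

variable {K : Type*} [Field K] [CharZero K]
variable (A M : Type*) [AddCommGroup A] [Module K A] [AddCommGroup M] [Module K M]

/-- The Gerstenhaber circle product `f ⋄ g` of (set-level) cochains:
`(f ⋄ g)(v₁,…,v_{m+n+1}) = Σ_{i=1}^{m+1} (−1)^{(i−1)n} f(v₁,…,v_{i−1}, g(v_i,…,v_{i+n}),
v_{i+n+1},…,v_{m+n+1})`. -/
def gCirc {V : Type*} [AddCommGroup V] (m n : ℕ)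
    (f : (Fin (m+1) → V) → V) (g : (Fin (n+1) → V) → V) :
    (Fin (m+n+1) → V) → V :=
  fun v => ∑ i : Fin (m+1), ((-1 : ℤ) ^ ((i : ℕ) * n)) •
    f (fun j =>
      if (j : ℕ) < (i : ℕ) then v ⟨(j : ℕ), by have := j.isLt; omega⟩
      else if (j : ℕ) = (i : ℕ) then
        g (fun k => v ⟨(i : ℕ) + (k : ℕ), by have := i.isLt; have := k.isLt; omega⟩)
      else v ⟨(j : ℕ) + n, by have := j.isLt; omega⟩)

/-- The Gerstenhaber bracket `[f,g] = f ⋄ g − (−1)^{mn} g ⋄ f`. -/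
def gBracket {V : Type*} [AddCommGroup V] (m n : ℕ)
    (f : (Fin (m+1) → V) → V) (g : (Fin (n+1) → V) → V) :
    (Fin (m+n+1) → V) → V :=
  fun v => gCirc m n f g v
    - ((-1 : ℤ) ^ (m * n)) • gCirc n m g f (fun j => v (Fin.cast (by omega) j))

/-- The horizontal lift of a multilinear map `M^{⊗k} → A` to a multilinear map
`(A ⊕ M)^{⊗k} → A ⊕ M`; it applies `f` to the `M`-components and embeds the result in `A`,
being zero on all other summands. -/
def hLift (k : ℕ) (f : (Fin k → M) → A) : (Fin k → A × M) → A × M :=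
  fun v => (f (fun i => (v i).2), 0)

/-- The Gerstenhaber bracket of the horizontal lifts of multilinear maps
`f : M^{⊗(m+1)} → A` and `g : M^{⊗(n+1)} → A` vanishes. -/
theorem statement0 (m n : ℕ)
    (f : MultilinearMap K (fun _ : Fin (m+1) => M) A)
    (g : MultilinearMap K (fun _ : Fin (n+1) => M) A) :
    gBracket m n (hLift A M (m+1) (fun v => f v)) (hLift A M (n+1) (fun v => g v)) = 0 := by
  have key : ∀ (p q : ℕ) (F : MultilinearMap K (fun _ : Fin (p+1) => M) A)
      (G : (Fin (q+1) → A × M) → A × M) (hG : ∀ w, (G w).2 = 0)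
      (w : Fin (p+q+1) → A × M),
      gCirc p q (hLift A M (p+1) (fun v => F v)) G w = 0 := by
    intro p q F G hG w
    unfold gCirc hLift
    apply Finset.sum_eq_zero
    intro i _
    have hz : F (fun j => ((if (j : ℕ) < (i : ℕ) then w ⟨(j : ℕ), by have := j.isLt; omega⟩
        else if (j : ℕ) = (i : ℕ) then
          G (fun k => w ⟨(i : ℕ) + (k : ℕ), by have := i.isLt; have := k.isLt; omega⟩)
        else w ⟨(j : ℕ) + q, by have := j.isLt; omega⟩)).2) = 0 := by
      apply F.map_coord_zero i
      simp [hG]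
    beta_reduce
    rw [hz]
    simp
  funext v
  simp only [gBracket, Pi.zero_apply]
  rw [key m n f _ (fun w => rfl) v, key n m g _ (fun w => rfl) _]
  simp

end
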